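/- In the xxy-gauge for the three-body problem, let the body-fixed Jacobi vectors be r⃗₁ = (r₁, 0, 0) and r⃗₂ = (r₂ cos φ, r₂ sin φ, 0) with shape (Jacobi) coordinates (q₁,q₂,q₃) = (r₁, r₂, φ), where r₁ > 0, r₂ > 0 and 0 < φ < π. Then: (a) the moment of inertia operator 𝕀u = r⃗₁ × (u × r⃗₁) + r⃗₂ × (u × r⃗₂) has matrix [[r₂² sin²φ, −r₂² sinφ cosφ, 0], [−r₂² sinφ cosφ, r₁² + r₂² cos²φ, 0], [0, 0, r₁² + r₂²]] and is invertible; (b) the mechanical connection vectors are A_{r₁} = A_{r₂} = (0,0,0) and A_φ = (0, 0, r₂²/(r₁² + r₂²)); (c) the horizontal metric matrix (d_{αβ}) = (h_{αβ} − A_α·(𝕀A_β)) is diag(1, 1, r₁²r₂²/(r₁² + r₂²)). -/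

import Mathlib

open scoped BigOperators Matrix

infixl:74 " ×₃ " => crossProduct

/-- Partial derivative `∂r/∂q_α` with respect to the shape coordinate `q_α`. -/
noncomputable def pdq (r : (Fin 3 → ℝ) → (Fin 3 → ℝ)) (q : Fin 3 → ℝ) (α : Fin 3) :
    Fin 3 → ℝ :=
  fderiv ℝ r q (Pi.single α 1)

/-- The moment of inertia operator `𝕀u = r₁ × (u × r₁) + r₂ × (u × r₂)`. -/
def inertiaOp (r₁ r₂ : (Fin 3 → ℝ) → (Fin 3 → ℝ)) (q u : Fin 3 → ℝ) : Fin 3 → ℝ :=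
  (r₁ q) ×₃ (u ×₃ (r₁ q)) + (r₂ q) ×₃ (u ×₃ (r₂ q))

/-- Euclidean dot product on `ℝ³`. -/
def dot3 (u v : Fin 3 → ℝ) : ℝ := ∑ i : Fin 3, u i * v i

/-- The body-fixed Jacobi vector `r⃗₁ = (r₁, 0, 0)` in the `xxy`-gauge. -/
noncomputable def R1 : (Fin 3 → ℝ) → (Fin 3 → ℝ) := fun q => ![q 0, 0, 0]

/-- The body-fixed Jacobi vector `r⃗₂ = (r₂ cos φ, r₂ sin φ, 0)` in the `xxy`-gauge. -/
noncomputable def R2 : (Fin 3 → ℝ) → (Fin 3 → ℝ) := fun q =>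
  ![q 1 * Real.cos (q 2), q 1 * Real.sin (q 2), 0]

/-!
Both Jacobi vectors lie in the body xy-plane, so `𝕀` is block diagonal: `(r₁² + r₂²) - r⃗₁r⃗₁ᵀ - r⃗₂r⃗₂ᵀ`
on the plane and `r₁² + r₂²` on the `z`-axis, with determinant `r₁² r₂² sin² φ (r₁² + r₂²) > 0`
for a non-collinear triangle. In the cross products `r⃗ × ∂r⃗/∂q_α` only rotation contributes:
`∂r⃗₁/∂r₁ ∥ r⃗₁`, `∂r⃗₂/∂r₂ ∥ r⃗₂`, and `r⃗₂ × ∂r⃗₂/∂φ = r₂² e_z`, an eigenvector of `𝕀`. Hence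
`A_φ = r₂²/(r₁² + r₂²) e_z` and the other connection vectors vanish; subtracting
`A_φ · 𝕀A_φ = r₂⁴/(r₁² + r₂²)` from the `φφ` entry of the shape metric `diag(1, 1, r₂²)` leaves
`r₁² r₂²/(r₁² + r₂²)`.
-/

open Matrix Real

noncomputable def xxyInertia (r₁ r₂ φ : ℝ) : Matrix (Fin 3) (Fin 3) ℝ :=
  !![r₂ ^ 2 * sin φ ^ 2, -(r₂ ^ 2 * sin φ * cos φ), 0;
    -(r₂ ^ 2 * sin φ * cos φ), r₁ ^ 2 + r₂ ^ 2 * cos φ ^ 2, 0;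
    0, 0, r₁ ^ 2 + r₂ ^ 2]

section Derivatives

variable (q : Fin 3 → ℝ)

lemma hasFDerivAt_R1 :
    HasFDerivAt R1
      (ContinuousLinearMap.pi ![.proj 0, 0, 0] : (Fin 3 → ℝ) →L[ℝ] Fin 3 → ℝ) q := by
  refine hasFDerivAt_pi'' fun i => ?_
  rw [ContinuousLinearMap.proj_pi]
  fin_cases i
  · exact hasFDerivAt_apply 0 q
  · exact hasFDerivAt_const 0 q
  · exact hasFDerivAt_const 0 q

lemma hasFDerivAt_R2 :
    HasFDerivAt R2
      (ContinuousLinearMap.pi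
        ![q 1 • (-sin (q 2)) • .proj 2 + cos (q 2) • .proj 1,
          q 1 • cos (q 2) • .proj 2 + sin (q 2) • .proj 1,
          0] : (Fin 3 → ℝ) →L[ℝ] Fin 3 → ℝ) q := by
  have hφ : HasFDerivAt (fun q : Fin 3 → ℝ => q 2)
      (ContinuousLinearMap.proj 2 : (Fin 3 → ℝ) →L[ℝ] ℝ) q :=
    hasFDerivAt_apply 2 q
  refine hasFDerivAt_pi'' fun i => ?_
  rw [ContinuousLinearMap.proj_pi]
  fin_cases i
  · exact (hasFDerivAt_apply 1 q).mul hφ.cos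
  · exact (hasFDerivAt_apply 1 q).mul hφ.sin
  · exact hasFDerivAt_const 0 q

lemma pdq_R1 (α : Fin 3) : pdq R1 q α = ![(Pi.single α 1 : Fin 3 → ℝ) 0, 0, 0] := by
  rw [pdq, (hasFDerivAt_R1 q).fderiv, ContinuousLinearMap.coe_pi']
  funext i
  fin_cases i <;> rfl

lemma pdq_R2 (α : Fin 3) :
    pdq R2 q α =
      ![(Pi.single α 1 : Fin 3 → ℝ) 1 * cos (q 2)
          - q 1 * sin (q 2) * (Pi.single α 1 : Fin 3 → ℝ) 2,
        (Pi.single α 1 : Fin 3 → ℝ) 1 * sin (q 2)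
          + q 1 * cos (q 2) * (Pi.single α 1 : Fin 3 → ℝ) 2,
        0] := by
  rw [pdq, (hasFDerivAt_R2 q).fderiv, ContinuousLinearMap.coe_pi']
  funext i
  fin_cases i <;>
    simp only [Fin.zero_eta, Fin.mk_one, Fin.reduceFinMk, cons_val_zero, cons_val_one,
      cons_val_two, tail_cons, head_cons, _root_.add_apply, _root_.smul_apply,
      _root_.zero_apply, ContinuousLinearMap.proj_apply, smul_eq_mul] <;>
    ring

end Derivatives

lemma R1_cross_pdq_add_R2_cross_pdq (r₁ r₂ φ : ℝ) (α : Fin 3) :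
    R1 ![r₁, r₂, φ] ×₃ pdq R1 ![r₁, r₂, φ] α + R2 ![r₁, r₂, φ] ×₃ pdq R2 ![r₁, r₂, φ] α =
      ![0, 0, r₂ ^ 2 * (Pi.single α 1 : Fin 3 → ℝ) 2] := by
  simp only [pdq_R1, pdq_R2, R1, R2, cross_apply, vec3_add, cons_val_zero, cons_val_one,
    cons_val_two, tail_cons, head_cons]
  refine vec3_eq (by ring) (by ring) ?_
  linear_combination r₂ ^ 2 * (Pi.single α 1 : Fin 3 → ℝ) 2 * sin_sq_add_cos_sq φ

lemma dot3_pdq_R1_add_dot3_pdq_R2 (r₁ r₂ φ : ℝ) (α β : Fin 3) :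
    dot3 (pdq R1 ![r₁, r₂, φ] α) (pdq R1 ![r₁, r₂, φ] β) +
        dot3 (pdq R2 ![r₁, r₂, φ] α) (pdq R2 ![r₁, r₂, φ] β) =
      diagonal ![1, 1, r₂ ^ 2] α β := by
  rw [pdq_R1, pdq_R1, pdq_R2, pdq_R2]
  fin_cases α <;> fin_cases β <;> simp [dot3, Fin.sum_univ_three] <;>
    grind [sin_sq_add_cos_sq]

lemma inertiaOp_R1_R2 (r₁ r₂ φ : ℝ) (u : Fin 3 → ℝ) :
    inertiaOp R1 R2 ![r₁, r₂, φ] u = xxyInertia r₁ r₂ φ *ᵥ u := by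
  simp only [inertiaOp, R1, R2, xxyInertia, cross_apply, vec3_add, cons_mulVec, empty_mulVec,
    vec3_dotProduct, cons_val_zero, cons_val_one, cons_val_two, tail_cons, head_cons]
  refine vec3_eq (by ring) (by ring) ?_
  linear_combination u 2 * r₂ ^ 2 * sin_sq_add_cos_sq φ

lemma det_xxyInertia (r₁ r₂ φ : ℝ) :
    (xxyInertia r₁ r₂ φ).det = r₁ ^ 2 * r₂ ^ 2 * sin φ ^ 2 * (r₁ ^ 2 + r₂ ^ 2) := by
  rw [xxyInertia, det_fin_three]
  simp only [of_apply, cons_val_zero, cons_val_one, cons_val_two, tail_cons, head_cons]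
  ring

lemma isUnit_xxyInertia {r₁ r₂ φ : ℝ} (hr₁ : r₁ ≠ 0) (hr₂ : r₂ ≠ 0) (hφ : sin φ ≠ 0) :
    IsUnit (xxyInertia r₁ r₂ φ) := by
  rw [isUnit_iff_isUnit_det, det_xxyInertia, isUnit_iff_ne_zero]
  positivity

lemma xxyInertia_mulVec_vec3_zero_zero (r₁ r₂ φ c : ℝ) :
    xxyInertia r₁ r₂ φ *ᵥ ![0, 0, c] = ![0, 0, (r₁ ^ 2 + r₂ ^ 2) * c] := by
  simp only [xxyInertia, cons_mulVec, empty_mulVec, vec3_dotProduct, cons_val_zero, cons_val_one,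
    cons_val_two, tail_cons, head_cons]
  exact vec3_eq (by ring) (by ring) (by ring)

lemma xxyInertia_inv_mulVec_vec3_zero_zero {r₁ r₂ φ : ℝ} (hr₁ : r₁ ≠ 0) (hr₂ : r₂ ≠ 0)
    (hφ : sin φ ≠ 0) (c : ℝ) :
    (xxyInertia r₁ r₂ φ)⁻¹ *ᵥ ![0, 0, c] = ![0, 0, c / (r₁ ^ 2 + r₂ ^ 2)] := by
  have := (isUnit_xxyInertia hr₁ hr₂ hφ).invertible
  apply inv_mulVec_eq_vec
  rw [xxyInertia_mulVec_vec3_zero_zero, mul_div_cancel₀ c (by positivity)]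

/-- In the `xxy`-gauge with Jacobi shape coordinates
`(r₁, r₂, φ)`: (a) the inertia operator has the stated matrix form and is
invertible; (b) the mechanical connection vectors are `A_{r₁} = A_{r₂} = 0` and
`A_φ = (0, 0, r₂²/(r₁²+r₂²))`; (c) the horizontal metric is
`diag(1, 1, r₁²r₂²/(r₁²+r₂²))`. -/
theorem xxy_gauge_inertia_connection_metric
    (r₁ r₂ φ : ℝ) (hr₁ : 0 < r₁) (hr₂ : 0 < r₂) (hφ₀ : 0 < φ) (hφπ : φ < Real.pi)
    (q : Fin 3 → ℝ) (hq : q = ![r₁, r₂, φ])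
    (Imat : Matrix (Fin 3) (Fin 3) ℝ)
    (hImat : Imat = !![r₂ ^ 2 * Real.sin φ ^ 2, -(r₂ ^ 2 * Real.sin φ * Real.cos φ), 0;
        -(r₂ ^ 2 * Real.sin φ * Real.cos φ), r₁ ^ 2 + r₂ ^ 2 * Real.cos φ ^ 2, 0;
        0, 0, r₁ ^ 2 + r₂ ^ 2])
    (A : Fin 3 → Fin 3 → ℝ)
    (hA : ∀ α, A α = Imat⁻¹.mulVec
      ((R1 q) ×₃ (pdq R1 q α) + (R2 q) ×₃ (pdq R2 q α)))
    (d : Fin 3 → Fin 3 → ℝ)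
    (hd : ∀ α β, d α β =
      (dot3 (pdq R1 q α) (pdq R1 q β) + dot3 (pdq R2 q α) (pdq R2 q β))
        - dot3 (A α) (Imat.mulVec (A β))) :
    (∀ u : Fin 3 → ℝ, inertiaOp R1 R2 q u = Imat.mulVec u) ∧
    IsUnit Imat ∧
    (A 0 = ![0, 0, 0] ∧ A 1 = ![0, 0, 0] ∧
      A 2 = ![0, 0, r₂ ^ 2 / (r₁ ^ 2 + r₂ ^ 2)]) ∧
    (∀ α β, d α β =
      Matrix.diagonal ![1, 1, r₁ ^ 2 * r₂ ^ 2 / (r₁ ^ 2 + r₂ ^ 2)] α β) := by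
  subst hq
  obtain rfl : Imat = xxyInertia r₁ r₂ φ := hImat
  have hsin : sin φ ≠ 0 := (sin_pos_of_pos_of_lt_pi hφ₀ hφπ).ne'
  have hA' (α : Fin 3) :
      A α = ![0, 0, r₂ ^ 2 * (Pi.single α 1 : Fin 3 → ℝ) 2 / (r₁ ^ 2 + r₂ ^ 2)] := by
    rw [hA, R1_cross_pdq_add_R2_cross_pdq]
    exact xxyInertia_inv_mulVec_vec3_zero_zero hr₁.ne' hr₂.ne' hsin _
  refine ⟨inertiaOp_R1_R2 r₁ r₂ φ, isUnit_xxyInertia hr₁.ne' hr₂.ne' hsin, by simp [hA'],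
    fun α β => ?_⟩
  have hnorm : r₁ ^ 2 + r₂ ^ 2 ≠ 0 := by positivity
  rw [hd, dot3_pdq_R1_add_dot3_pdq_R2, hA', hA', xxyInertia_mulVec_vec3_zero_zero]
  fin_cases α <;> fin_cases β <;> simp [dot3, Fin.sum_univ_three]
  field_simp
  ring
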